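/- Let x₁, x₂, x₃ ∈ ℝⁿ, y₁ = x₁ ≠ 0, y₂ = (I − Q₁)x₂ ≠ 0, y₃ = (I − Q₂)(I − Q₁)x₃, where Q_i = (y_i/‖y_i‖_p) φ(y_i)ᵀ for p ∈ {1,2}. Then φ(y₁)ᵀ y₃ = 0 and φ(y₂)ᵀ y₃ = 0. -/

import Mathlib

/-! Each `Q v` is the rank-one map `z ↦ (φ v ⬝ᵥ z) • u_v` with `u_v = v / N v`, and for `v ≠ 0` the
normalisation `φ v ⬝ᵥ u_v = 1` holds for both `p = 1` and `p = 2`, so `I - Q v` maps into the kernel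
of `φ v`. This gives `φ y₂ ⬝ᵥ y₃ = 0` directly. Since `y₂` already lies in the kernel of `φ y₁`, so
does `u_{y₂}`; subtracting a multiple of it leaves `φ y₁ ⬝ᵥ _` unchanged, and `φ y₁` vanishes on
`x₃ - Q y₁ x₃`. -/

open Finset

theorem Real.sign_mul_self_eq_abs (r : ℝ) : Real.sign r * r = |r| := by
  rcases lt_trichotomy r 0 with hr | rfl | hr
  · rw [Real.sign_of_neg hr, abs_of_neg hr, neg_one_mul]
  · simp
  · rw [Real.sign_of_pos hr, abs_of_pos hr, one_mul]

section DotProduct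

variable {ι R K : Type*} [Fintype ι] [CommRing R] [Field K]

theorem dotProduct_div_const (a y : ι → K) (c : K) :
    a ⬝ᵥ (fun i => y i / c) = a ⬝ᵥ y / c := by
  simp only [dotProduct, mul_div_assoc', Finset.sum_div]

theorem dotProduct_sub_smul_self_eq_zero {a u : ι → R} (hu : a ⬝ᵥ u = 1) (z : ι → R) :
    a ⬝ᵥ (z - (a ⬝ᵥ z) • u) = 0 := by
  rw [dotProduct_sub, dotProduct_smul, hu, smul_eq_mul, mul_one, sub_self]

theorem dotProduct_sub_smul_of_dotProduct_eq_zero {b u : ι → R} (hu : b ⬝ᵥ u = 0)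
    (a z : ι → R) : b ⬝ᵥ (z - (a ⬝ᵥ z) • u) = b ⬝ᵥ z := by
  rw [dotProduct_sub, dotProduct_smul, hu, smul_zero, sub_zero]

end DotProduct

section Norming

variable {ι : Type*} [Fintype ι]

theorem sign_dotProduct_div_sum_abs {y : ι → ℝ} (hy : y ≠ 0) :
    (fun i => Real.sign (y i)) ⬝ᵥ (fun i => y i / ∑ j, |y j|) = 1 := by
  have hsign : (fun i => Real.sign (y i)) ⬝ᵥ y = ∑ j, |y j| := by
    simp only [dotProduct, Real.sign_mul_self_eq_abs]
  have hpos : 0 < ∑ j, |y j| := by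
    obtain ⟨j, hj⟩ := Function.ne_iff.mp hy
    exact sum_pos' (fun i _ => abs_nonneg _) ⟨j, mem_univ j, abs_pos.mpr hj⟩
  rw [dotProduct_div_const, hsign, div_self hpos.ne']

theorem div_sqrt_dotProduct_div_sqrt {y : ι → ℝ} (hy : y ≠ 0) :
    (fun i => y i / √(∑ j, y j ^ 2)) ⬝ᵥ (fun i => y i / √(∑ j, y j ^ 2)) = 1 := by
  have hself : y ⬝ᵥ y = ∑ j, y j ^ 2 := by simp only [dotProduct, sq]
  have hne : ∑ j, y j ^ 2 ≠ 0 := hself ▸ dotProduct_self_eq_zero.not.mpr hy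
  rw [dotProduct_div_const, dotProduct_comm, dotProduct_div_const, div_div, hself,
    ← sq, Real.sq_sqrt (by positivity), div_self hne]

end Norming

theorem stmt3 {n : ℕ} (p : ℕ) (hp : p = 1 ∨ p = 2) (x₁ x₂ x₃ : Fin n → ℝ) :
    let N : (Fin n → ℝ) → ℝ := fun y =>
      if p = 1 then ∑ i, |y i| else Real.sqrt (∑ i, (y i) ^ 2)
    let φ : (Fin n → ℝ) → (Fin n → ℝ) := fun y =>
      if p = 1 then fun i => Real.sign (y i) else fun i => y i / N y
    let Q : (Fin n → ℝ) → (Fin n → ℝ) → (Fin n → ℝ) :=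
      fun v y => (∑ i, φ v i * y i) • fun i => v i / N v
    let y₁ : Fin n → ℝ := x₁
    let y₂ : Fin n → ℝ := x₂ - Q y₁ x₂
    let y₃ : Fin n → ℝ := (x₃ - Q y₁ x₃) - Q y₂ (x₃ - Q y₁ x₃)
    y₁ ≠ 0 → y₂ ≠ 0 →
      (∑ i, φ y₁ i * y₃ i = 0 ∧ ∑ i, φ y₂ i * y₃ i = 0) := by
  intro N φ Q y₁ y₂ y₃ h₁ h₂
  have hnorming : ∀ y, y ≠ 0 → φ y ⬝ᵥ (fun i => y i / N y) = 1 := by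
    rcases hp with rfl | rfl
    · exact fun y => sign_dotProduct_div_sum_abs
    · exact fun y => div_sqrt_dotProduct_div_sqrt
  have h₁₂ : φ y₁ ⬝ᵥ y₂ = 0 := dotProduct_sub_smul_self_eq_zero (hnorming y₁ h₁) x₂
  have h₁u₂ : φ y₁ ⬝ᵥ (fun i => y₂ i / N y₂) = 0 := by
    rw [dotProduct_div_const, h₁₂, zero_div]
  refine ⟨?_, dotProduct_sub_smul_self_eq_zero (hnorming y₂ h₂) _⟩
  exact (dotProduct_sub_smul_of_dotProduct_eq_zero h₁u₂ _ _).trans <|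
    dotProduct_sub_smul_self_eq_zero (hnorming y₁ h₁) x₃
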